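/- arXiv:0709.3143 — 2 statements merged into one kernel-verified Lean document; each statement's English description precedes it below -/
import Mathlib

section
/- Let T be an invertible real 2n×2n symplectic matrix (Tᵀ J_{2n} T = J_{2n}), let Ω be a real orthogonal 2n×2n matrix satisfying Ωᵀ J_{2n} Ω = J̃_{2n}, and let R be an upper triangular 2n×2n real matrix with strictly positive diagonal entries such that Q := T Ω R⁻¹ is orthogonal (i.e., T Ω = Q R is a QR factorization). Then the matrix N := T Ω R⁻¹ Ωᵀ is symplectic, i.e., Nᵀ J_{2n} N = J_{2n}, and consequently N commutes with J_{2n}: J_{2n} N = N J_{2n}. -/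
/-!
Write `Q = TΩR⁻¹` and `S = Qᵀ J Q = R⁻ᵀ J̃ R⁻¹`. As `Q` is orthogonal and `J² = -1`, `S² = -1`; as
also `J̃² = -1`, this gives the second form `S = R J̃ Rᵀ`. After reversing the column order, the
first form is a product of lower triangular matrices and the second one of upper triangular
matrices, so `S` is antidiagonal, and comparing its antidiagonal entries in the two forms gives
`(rᵢᵢ r_{ī ī})⁻¹ = rᵢᵢ r_{ī ī}` (`ī` the reversed index). Positivity of the diagonal of `R` forces
`rᵢᵢ r_{ī ī} = 1`, that is `S = J̃`. Hence `Nᵀ J N = Ω S Ωᵀ = Ω J̃ Ωᵀ = J`, and the orthogonal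
symplectic matrix `N` commutes with `J`.
-/

open Matrix

/-- The standard symplectic matrix `J_{2n} = [[0, -I_n],[I_n, 0]]` as a `2n × 2n` real matrix. -/
noncomputable def Jmat (n : ℕ) : Matrix (Fin (2*n)) (Fin (2*n)) ℝ :=
  fun i j => if (i : ℕ) + n = (j : ℕ) then -1 else if (j : ℕ) + n = (i : ℕ) then 1 else 0

/-- The antidiagonal matrix `Ĩ_n` with ones on the antidiagonal. -/
noncomputable def Itilde (n : ℕ) : Matrix (Fin n) (Fin n) ℝ :=
  fun i j => if (i : ℕ) + (j : ℕ) + 1 = n then 1 else 0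

/-- The matrix `J̃_{2n} = [[0, -Ĩ_n],[Ĩ_n, 0]]`. -/
noncomputable def Jtilde (n : ℕ) : Matrix (Fin (2*n)) (Fin (2*n)) ℝ :=
  fun i j => if (i : ℕ) + (j : ℕ) + 1 = 2*n then (if (i : ℕ) < n then -1 else 1) else 0

namespace Matrix

section Triangular

variable {m α β : Type*} [LinearOrder β] {b : m → β}

theorem BlockTriangular.mul_apply_self [Fintype m] [NonUnitalNonAssocSemiring α]
    {M N : Matrix m m α} (hb : Function.Injective b) (hM : M.BlockTriangular b)
    (hN : N.BlockTriangular b) (i : m) : (M * N) i i = M i i * N i i := by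
  rw [mul_apply, Finset.sum_eq_single i (fun k _ hki => ?_) (by simp)]
  rcases lt_or_gt_of_ne (hb.ne hki) with h | h
  · rw [hM h, zero_mul]
  · rw [hN h, mul_zero]

theorem BlockTriangular.inv_apply_self [Fintype m] [DecidableEq m] [Field α]
    {M : Matrix m m α} (hb : Function.Injective b) (hM : M.BlockTriangular b)
    (hdet : IsUnit M.det) (i : m) : M⁻¹ i i = (M i i)⁻¹ := by
  have : Invertible M := M.invertibleOfIsUnitDet hdet
  refine eq_inv_of_mul_eq_one_right ?_
  rw [← hM.mul_apply_self hb (blockTriangular_inv_of_blockTriangular hM), mul_nonsing_inv M hdet,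
    one_apply_eq]

theorem BlockTriangular.mul_diagonal_mul_apply_self [Fintype m] [DecidableEq m]
    [NonUnitalNonAssocSemiring α] {A B : Matrix m m α} (hb : Function.Injective b)
    (hA : A.BlockTriangular b) (hB : B.BlockTriangular b) (d : m → α) (i : m) :
    (A * diagonal d * B) i i = A i i * d i * B i i := by
  rw [(hA.mul (blockTriangular_diagonal d)).mul_apply_self hb hB,
    hA.mul_apply_self hb (blockTriangular_diagonal d), diagonal_apply_eq]

theorem IsUpperTriangular.isUnit_det [LinearOrder m] [Fintype m] [CommRing α]
    {M : Matrix m m α} (hM : M.IsUpperTriangular) (hd : ∀ i, IsUnit (M i i)) : IsUnit M.det := by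
  rw [det_of_isUpperTriangular hM]
  exact IsUnit.prod_univ_iff.mpr hd

theorem IsUpperTriangular.isDiag_of_isLowerTriangular [LinearOrder m] [Zero α]
    {M : Matrix m m α} (hU : M.IsUpperTriangular) (hL : M.IsLowerTriangular) : M.IsDiag :=
  fun _ _ hij => (lt_or_gt_of_ne hij).elim (fun h => hL h) (fun h => hU h)

variable {k : ℕ} [Zero α] {M : Matrix (Fin k) (Fin k) α}

theorem IsUpperTriangular.submatrix_rev (h : M.IsUpperTriangular) :
    (M.submatrix Fin.rev Fin.rev).IsLowerTriangular :=
  fun _ _ hij => h (Fin.rev_lt_rev.mpr hij)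

theorem IsLowerTriangular.submatrix_rev (h : M.IsLowerTriangular) :
    (M.submatrix Fin.rev Fin.rev).IsUpperTriangular :=
  fun _ _ hij => h (Fin.rev_lt_rev.mpr hij)

end Triangular

section Antidiagonal

variable {α : Type*} {k : ℕ}

def antidiagonal [Zero α] (d : Fin k → α) : Matrix (Fin k) (Fin k) α :=
  (diagonal d).submatrix id Fin.rev

theorem antidiagonal_mul_antidiagonal [NonAssocSemiring α] (d e : Fin k → α) :
    antidiagonal d * antidiagonal e = diagonal fun i => d i * e i.rev := by
  ext i j
  simp only [antidiagonal, mul_apply, submatrix_apply, id, diagonal_apply, mul_ite, ite_mul,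
    zero_mul, mul_zero, Finset.sum_ite_eq', Finset.mem_univ, ↓reduceIte, Fin.rev_rev, eq_comm]
  split_ifs with h <;> simp [h]

theorem mul_antidiagonal_mul_submatrix_rev [NonAssocSemiring α]
    (A B : Matrix (Fin k) (Fin k) α) (d : Fin k → α) :
    (A * antidiagonal d * B).submatrix id Fin.rev =
      A * diagonal d * B.submatrix Fin.rev Fin.rev := by
  ext i j
  simp only [antidiagonal, mul_apply, submatrix_apply, id]
  exact Fintype.sum_equiv Fin.revPerm _ _ fun l => by simp

variable {U : Matrix (Fin k) (Fin k) α}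

theorem IsUpperTriangular.mul_antidiagonal_mul_transpose_rev [NonAssocSemiring α]
    (hU : U.IsUpperTriangular) (d : Fin k → α) :
    ((U * antidiagonal d * Uᵀ).submatrix id Fin.rev).IsUpperTriangular := by
  rw [mul_antidiagonal_mul_submatrix_rev]
  exact (hU.mul (blockTriangular_diagonal d)).mul (IsLowerTriangular.submatrix_rev hU.transpose)

theorem IsUpperTriangular.mul_antidiagonal_mul_transpose_rev_apply_self [NonAssocSemiring α]
    (hU : U.IsUpperTriangular) (d : Fin k → α) (i : Fin k) :
    (U * antidiagonal d * Uᵀ).submatrix id Fin.rev i i = U i i * d i * U i.rev i.rev := by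
  rw [mul_antidiagonal_mul_submatrix_rev, hU.mul_diagonal_mul_apply_self Function.injective_id
    (IsLowerTriangular.submatrix_rev hU.transpose)]
  rfl

theorem IsUpperTriangular.transpose_mul_antidiagonal_mul_rev [NonAssocSemiring α]
    (hU : U.IsUpperTriangular) (d : Fin k → α) :
    ((Uᵀ * antidiagonal d * U).submatrix id Fin.rev).IsLowerTriangular := by
  rw [mul_antidiagonal_mul_submatrix_rev]
  exact (hU.transpose.mul (blockTriangular_diagonal d)).mul hU.submatrix_rev

theorem IsUpperTriangular.transpose_mul_antidiagonal_mul_rev_apply_self [NonAssocSemiring α]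
    (hU : U.IsUpperTriangular) (d : Fin k → α) (i : Fin k) :
    (Uᵀ * antidiagonal d * U).submatrix id Fin.rev i i = U i i * d i * U i.rev i.rev := by
  rw [mul_antidiagonal_mul_submatrix_rev, hU.transpose.mul_diagonal_mul_apply_self
    OrderDual.toDual.injective hU.submatrix_rev]
  rfl

theorem IsUpperTriangular.inv_transpose_mul_antidiagonal_mul_inv_eq [Field α] [LinearOrder α]
    [IsStrictOrderedRing α] {R : Matrix (Fin k) (Fin k) α} (hR : R.IsUpperTriangular)
    (hRdiag : ∀ i, 0 < R i i) {d : Fin k → α} (hd : ∀ i, d i ≠ 0)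
    (h : R⁻¹ᵀ * antidiagonal d * R⁻¹ = R * antidiagonal d * Rᵀ) :
    R⁻¹ᵀ * antidiagonal d * R⁻¹ = antidiagonal d := by
  have hdet := hR.isUnit_det fun i => (hRdiag i).ne'.isUnit
  have hRinv : R⁻¹.IsUpperTriangular :=
    have := R.invertibleOfIsUnitDet hdet
    blockTriangular_inv_of_blockTriangular hR
  have hSL : ((R * antidiagonal d * Rᵀ).submatrix id Fin.rev).IsLowerTriangular :=
    h ▸ hRinv.transpose_mul_antidiagonal_mul_rev d
  have hSdiag (i : Fin k) : (R * antidiagonal d * Rᵀ).submatrix id Fin.rev i i = d i := by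
    have hupper := hR.mul_antidiagonal_mul_transpose_rev_apply_self d i
    have hlower := h ▸ hRinv.transpose_mul_antidiagonal_mul_rev_apply_self d i
    rw [hR.inv_apply_self Function.injective_id hdet,
      hR.inv_apply_self Function.injective_id hdet] at hlower
    have hpos := mul_pos (hRdiag i) (hRdiag i.rev)
    have hinv : R i i * R i.rev i.rev = (R i i * R i.rev i.rev)⁻¹ :=
      mul_right_cancel₀ (hd i) (by linear_combination hupper.symm.trans hlower)
    have hone : R i i * R i.rev i.rev = 1 :=
      ((self_eq_inv₀.mp hinv).resolve_left (by linarith)).resolve_left hpos.ne'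
    rw [hupper, mul_right_comm, hone, one_mul]
  have hSd : (R * antidiagonal d * Rᵀ).submatrix id Fin.rev = diagonal d := by
    rw [← ((hR.mul_antidiagonal_mul_transpose_rev d).isDiag_of_isLowerTriangular hSL).diagonal_diag]
    exact congrArg diagonal (funext hSdiag)
  calc R⁻¹ᵀ * antidiagonal d * R⁻¹ = R * antidiagonal d * Rᵀ := h
    _ = ((R * antidiagonal d * Rᵀ).submatrix id Fin.rev).submatrix id Fin.rev := by
      rw [submatrix_submatrix, Fin.rev_involutive.comp_self, Function.id_comp, submatrix_id_id]
    _ = antidiagonal d := by rw [hSd, antidiagonal]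

end Antidiagonal

section CommRing

variable {m α : Type*} [Fintype m] [DecidableEq m] [CommRing α]

theorem transpose_mul_mul_mul_self_eq_neg_one {Q K : Matrix m m α} (hQ : Q * Qᵀ = 1)
    (hK : K * K = -1) :
    Qᵀ * K * Q * (Qᵀ * K * Q) = -1 := by
  calc Qᵀ * K * Q * (Qᵀ * K * Q) = Qᵀ * (K * (Q * Qᵀ) * K) * Q := by
        simp only [Matrix.mul_assoc]
    _ = -(Qᵀ * Q) := by
      rw [hQ, Matrix.mul_one, hK, Matrix.mul_neg, Matrix.neg_mul, Matrix.mul_one]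
    _ = -1 := by rw [mul_eq_one_comm.mp hQ]

theorem commute_of_mul_transpose_eq_one {M J : Matrix m m α} (hM : M * Mᵀ = 1)
    (hMJ : Mᵀ * J * M = J) :
    J * M = M * J := by
  calc J * M = M * Mᵀ * (J * M) := by rw [hM, Matrix.one_mul]
    _ = M * (Mᵀ * J * M) := by simp only [Matrix.mul_assoc]
    _ = M * J := by rw [hMJ]

theorem mul_mul_transpose_eq_of_mul_self_eq_neg_one {R K : Matrix m m α} (hR : IsUnit R.det)
    (hK : K * K = -1) (hS : R⁻¹ᵀ * K * R⁻¹ * (R⁻¹ᵀ * K * R⁻¹) = -1) :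
    R * K * Rᵀ = R⁻¹ᵀ * K * R⁻¹ := by
  set S := R⁻¹ᵀ * K * R⁻¹
  have hSK : S * (R * K * Rᵀ) = -1 := by
    calc S * (R * K * Rᵀ) = R⁻¹ᵀ * (K * (R⁻¹ * R) * K) * Rᵀ := by
          simp only [S, Matrix.mul_assoc]
      _ = -(R * R⁻¹)ᵀ := by
        rw [nonsing_inv_mul R hR, Matrix.mul_one, hK, Matrix.mul_neg, Matrix.neg_mul,
          Matrix.mul_one, transpose_mul]
      _ = -1 := by rw [mul_nonsing_inv R hR, transpose_one]
  calc R * K * Rᵀ = -(S * S) * (R * K * Rᵀ) := by rw [hS, neg_neg, Matrix.one_mul]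
    _ = S := by rw [Matrix.neg_mul, Matrix.mul_assoc, hSK, Matrix.mul_neg, Matrix.mul_one, neg_neg]

end CommRing

end Matrix

def finSumFinEquivTwoMul (n : ℕ) : Fin n ⊕ Fin n ≃ Fin (2 * n) :=
  finSumFinEquiv.trans (finCongr (two_mul n).symm)

theorem Jmat_eq_reindex_J (n : ℕ) :
    Jmat n = reindex (finSumFinEquivTwoMul n) (finSumFinEquivTwoMul n) (J (Fin n) ℝ) := by
  ext i j
  obtain ⟨a | a, rfl⟩ := (finSumFinEquivTwoMul n).surjective i <;>
  obtain ⟨b | b, rfl⟩ := (finSumFinEquivTwoMul n).surjective j <;>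
  simp only [reindex_apply, submatrix_apply, Equiv.symm_apply_apply] <;>
  simp only [Jmat, J, finSumFinEquivTwoMul, Equiv.trans_apply, finSumFinEquiv_apply_left, finSumFinEquiv_apply_right,
    finCongr_apply, Fin.val_cast, Fin.val_castAdd, Fin.natAdd_eq_addNat, Fin.val_addNat,
    fromBlocks_apply₁₁, fromBlocks_apply₁₂, fromBlocks_apply₂₁, fromBlocks_apply₂₂, Matrix.zero_apply,
    Matrix.neg_apply, one_apply, Fin.ext_iff] <;> grind

theorem Jmat_mul_self (n : ℕ) : Jmat n * Jmat n = -1 := by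
  rw [Jmat_eq_reindex_J, reindex_apply, submatrix_mul_equiv, J_squared]
  exact congrArg Neg.neg (submatrix_one_equiv _)

theorem Jtilde_eq_antidiagonal (n : ℕ) :
    Jtilde n = antidiagonal fun i : Fin (2 * n) => if (i : ℕ) < n then -1 else 1 := by
  ext i j
  simp only [Jtilde, antidiagonal, submatrix_apply, id_eq, diagonal_apply, Fin.ext_iff, Fin.val_rev]
  grind

theorem Jtilde_mul_self (n : ℕ) : Jtilde n * Jtilde n = -1 := by
  rw [Jtilde_eq_antidiagonal, antidiagonal_mul_antidiagonal]
  ext i j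
  simp only [Fin.val_rev, mul_ite, mul_neg, mul_one, diagonal_apply, Matrix.neg_apply, one_apply]
  grind

theorem Matrix.IsUpperTriangular.inv_transpose_mul_Jtilde_mul_inv_eq {n : ℕ}
    {R : Matrix (Fin (2 * n)) (Fin (2 * n)) ℝ} (hR : R.IsUpperTriangular)
    (hRdiag : ∀ i, 0 < R i i) (h : R⁻¹ᵀ * Jtilde n * R⁻¹ * (R⁻¹ᵀ * Jtilde n * R⁻¹) = -1) :
    R⁻¹ᵀ * Jtilde n * R⁻¹ = Jtilde n := by
  have hJ := Jtilde_mul_self n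
  rw [Jtilde_eq_antidiagonal] at h hJ ⊢
  exact hR.inv_transpose_mul_antidiagonal_mul_inv_eq hRdiag (fun i => by split_ifs <;> norm_num)
    (mul_mul_transpose_eq_of_mul_self_eq_neg_one (hR.isUnit_det fun i => (hRdiag i).ne'.isUnit)
      hJ h).symm

theorem numerical_dynamics_symplectic_general (n : ℕ)
    (T Ω R : Matrix (Fin (2*n)) (Fin (2*n)) ℝ)
    (hTsymp : Tᵀ * Jmat n * T = Jmat n)
    (hΩorth : Ωᵀ * Ω = 1)
    (hΩJ : Ωᵀ * Jmat n * Ω = Jtilde n)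
    (hRtri : ∀ i j : Fin (2*n), (j : ℕ) < (i : ℕ) → R i j = 0)
    (hRdiag : ∀ i : Fin (2*n), 0 < R i i)
    (hQorth : (T * Ω * R⁻¹)ᵀ * (T * Ω * R⁻¹) = 1) :
    (T * Ω * R⁻¹ * Ωᵀ)ᵀ * Jmat n * (T * Ω * R⁻¹ * Ωᵀ) = Jmat n ∧
    Jmat n * (T * Ω * R⁻¹ * Ωᵀ) = (T * Ω * R⁻¹ * Ωᵀ) * Jmat n := by
  set Q := T * Ω * R⁻¹
  have hR : R.IsUpperTriangular := fun i j h => hRtri i j h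
  have hQJQ : Qᵀ * Jmat n * Q = R⁻¹ᵀ * Jtilde n * R⁻¹ := by
    calc Qᵀ * Jmat n * Q = R⁻¹ᵀ * (Ωᵀ * (Tᵀ * Jmat n * T) * Ω) * R⁻¹ := by
          simp only [Q, transpose_mul, Matrix.mul_assoc]
      _ = R⁻¹ᵀ * Jtilde n * R⁻¹ := by rw [hTsymp, hΩJ]
  have hS : R⁻¹ᵀ * Jtilde n * R⁻¹ = Jtilde n :=
    hR.inv_transpose_mul_Jtilde_mul_inv_eq hRdiag
      (hQJQ ▸ transpose_mul_mul_mul_self_eq_neg_one (mul_eq_one_comm.mp hQorth) (Jmat_mul_self n))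
  have hN : (Q * Ωᵀ)ᵀ * Jmat n * (Q * Ωᵀ) = Jmat n := by
    calc (Q * Ωᵀ)ᵀ * Jmat n * (Q * Ωᵀ) = Ω * (Qᵀ * Jmat n * Q) * Ωᵀ := by
          simp only [transpose_mul, transpose_transpose, Matrix.mul_assoc]
      _ = Ω * (Ωᵀ * Jmat n * Ω) * Ωᵀ := by rw [hQJQ, hS, hΩJ]
      _ = (Ω * Ωᵀ) * Jmat n * (Ω * Ωᵀ) := by simp only [Matrix.mul_assoc]
      _ = Jmat n := by rw [mul_eq_one_comm.mp hΩorth, Matrix.one_mul, Matrix.mul_one]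
  have hNorth : Q * Ωᵀ * (Q * Ωᵀ)ᵀ = 1 := by
    rw [transpose_mul, transpose_transpose, Matrix.mul_assoc, ← Matrix.mul_assoc Ωᵀ, hΩorth,
      Matrix.one_mul, mul_eq_one_comm.mp hQorth]
  exact ⟨hN, commute_of_mul_transpose_eq_one hNorth hN⟩

/-- if `T` is an invertible symplectic matrix, `Ω` is orthogonal with
`Ωᵀ J Ω = J̃`, `R` is upper triangular with strictly positive diagonal and
`Q = T Ω R⁻¹` is orthogonal, then `N = T Ω R⁻¹ Ωᵀ` is symplectic and commutes with `J`. -/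
theorem numerical_dynamics_symplectic (n : ℕ)
    (T Ω R : Matrix (Fin (2*n)) (Fin (2*n)) ℝ)
    (hTinv : IsUnit T.det)
    (hTsymp : Tᵀ * Jmat n * T = Jmat n)
    (hΩorth : Ωᵀ * Ω = 1)
    (hΩJ : Ωᵀ * Jmat n * Ω = Jtilde n)
    (hRtri : ∀ i j : Fin (2*n), (j : ℕ) < (i : ℕ) → R i j = 0)
    (hRdiag : ∀ i : Fin (2*n), 0 < R i i)
    (hQorth : (T * Ω * R⁻¹)ᵀ * (T * Ω * R⁻¹) = 1) :
    (T * Ω * R⁻¹ * Ωᵀ)ᵀ * Jmat n * (T * Ω * R⁻¹ * Ωᵀ) = Jmat n ∧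
    Jmat n * (T * Ω * R⁻¹ * Ωᵀ) = (T * Ω * R⁻¹ * Ωᵀ) * Jmat n :=
  numerical_dynamics_symplectic_general n T Ω R hTsymp hΩorth hΩJ hRtri hRdiag hQorth
end

section
/- Let R be a 2n×2n real upper triangular matrix with strictly positive diagonal entries. If the symmetric matrix Rᵀ R satisfies (Rᵀ R) J̃_{2n} (Rᵀ R) = J̃_{2n}, then R itself satisfies Rᵀ J̃_{2n} R = J̃_{2n}. -/
/-!
Since `RᵀR J̃ RᵀR = J̃` and `J̃` is orthogonal with `J̃² = -1`, the matrix `U = J̃ R⁻ᵀ J̃ᵀ`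
satisfies `UᵀU = J̃ (RᵀR)⁻¹ J̃ᵀ = RᵀR`. Conjugating by `J̃` reverses the order of the
coordinates (up to signs), so `U` is again upper triangular with positive diagonal, and
uniqueness of the Cholesky factor gives `U = R`, which rearranges to `Rᵀ J̃ R = J̃`.
-/

open Matrix

namespace Matrix.IsUpperTriangular

variable {m : Type*} [Fintype m] [LinearOrder m]

theorem mul_apply_self {K : Type*} [NonUnitalNonAssocSemiring K] {A B : Matrix m m K}
    (hA : A.IsUpperTriangular) (hB : B.IsUpperTriangular) (i : m) :
    (A * B) i i = A i i * B i i := by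
  rw [mul_apply, Finset.sum_eq_single i]
  · intro k _ hk
    rcases hk.lt_or_gt with h | h
    · rw [hA h, zero_mul]
    · rw [hB h, mul_zero]
  · simp

variable {K : Type*} [Field K]

theorem inv {A : Matrix m m K} (hA : A.IsUpperTriangular) : A⁻¹.IsUpperTriangular := by
  by_cases h : IsUnit A.det
  · have := A.invertibleOfIsUnitDet h
    exact blockTriangular_inv_of_blockTriangular hA
  · rw [nonsing_inv_apply_not_isUnit A h]
    exact blockTriangular_zero

theorem isUnit_det_s1 {A : Matrix m m K} (hA : A.IsUpperTriangular) (hd : ∀ i, A i i ≠ 0) :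
    IsUnit A.det := by
  rw [det_of_isUpperTriangular hA, isUnit_iff_ne_zero]
  exact Finset.prod_ne_zero_iff.mpr fun i _ => hd i

theorem inv_apply_self {A : Matrix m m K} (hA : A.IsUpperTriangular) (hd : ∀ i, A i i ≠ 0)
    (i : m) : A⁻¹ i i = (A i i)⁻¹ := by
  have h := congrFun (congrFun (mul_nonsing_inv A (hA.isUnit_det_s1 hd)) i) i
  rw [hA.mul_apply_self hA.inv, one_apply_eq] at h
  exact eq_inv_of_mul_eq_one_right h

variable [LinearOrder K] [IsStrictOrderedRing K]

theorem eq_one_of_transpose_mul_self_eq_one {W : Matrix m m K} (hW : W.IsUpperTriangular)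
    (hd : ∀ i, 0 < W i i) (h : Wᵀ * W = 1) : W = 1 := by
  have hWt : Wᵀ.IsUpperTriangular := by
    rw [← inv_eq_left_inv h]
    exact hW.inv
  have hdiag (i : m) : W i i = 1 := by
    have hsq : W i i * W i i = 1 := by
      simpa [hWt.mul_apply_self hW] using congrFun (congrFun h i) i
    exact (mul_self_eq_one_iff.mp hsq).resolve_right (by linarith [hd i])
  ext i j
  rcases lt_trichotomy i j with hij | rfl | hij
  · rw [one_apply_ne hij.ne]
    exact hWt hij
  · rw [hdiag, one_apply_eq]
  · rw [one_apply_ne hij.ne']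
    exact hW hij

/-- Uniqueness of the Cholesky factor. -/
theorem eq_of_transpose_mul_self_eq {U V : Matrix m m K} (hU : U.IsUpperTriangular)
    (hV : V.IsUpperTriangular) (hUd : ∀ i, 0 < U i i) (hVd : ∀ i, 0 < V i i)
    (h : Uᵀ * U = Vᵀ * V) : U = V := by
  have hVu : IsUnit V.det := hV.isUnit_det_s1 fun i => (hVd i).ne'
  have hW : (U * V⁻¹).IsUpperTriangular := hU.mul hV.inv
  have hWd (i : m) : 0 < (U * V⁻¹) i i := by
    rw [hU.mul_apply_self hV.inv, hV.inv_apply_self fun i => (hVd i).ne']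
    exact mul_pos (hUd i) (inv_pos.mpr (hVd i))
  have hWW : (U * V⁻¹)ᵀ * (U * V⁻¹) = 1 := by
    rw [transpose_mul, Matrix.mul_assoc, ← Matrix.mul_assoc Uᵀ, h, Matrix.mul_assoc Vᵀ,
      mul_nonsing_inv V hVu, Matrix.mul_one, ← transpose_mul, mul_nonsing_inv V hVu,
      transpose_one]
  calc U = U * V⁻¹ * V := by rw [Matrix.mul_assoc, nonsing_inv_mul V hVu, Matrix.mul_one]
    _ = V := by rw [hW.eq_one_of_transpose_mul_self_eq_one hWd hWW, Matrix.one_mul]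

end Matrix.IsUpperTriangular

def jtildeSign (n : ℕ) (i : Fin (2 * n)) : ℝ := if (i : ℕ) < n then -1 else 1

theorem jtildeSign_mul_self (n : ℕ) (i : Fin (2 * n)) : jtildeSign n i * jtildeSign n i = 1 := by
  unfold jtildeSign
  split_ifs <;> norm_num

theorem Jtilde_apply (n : ℕ) (i j : Fin (2 * n)) :
    Jtilde n i j = if j = i.rev then jtildeSign n i else 0 := by
  have hrev : (i : ℕ) + j + 1 = 2 * n ↔ j = i.rev := by
    rw [Fin.ext_iff, Fin.val_rev]
    omega
  simp only [Jtilde, jtildeSign, hrev]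

theorem Jtilde_transpose (n : ℕ) : (Jtilde n)ᵀ = -Jtilde n := by
  ext i j
  rw [transpose_apply, neg_apply]
  unfold Jtilde
  split_ifs <;> (try norm_num) <;> omega

theorem Jtilde_mul_mul_transpose_apply (n : ℕ) (M : Matrix (Fin (2 * n)) (Fin (2 * n)) ℝ)
    (i j : Fin (2 * n)) :
    (Jtilde n * M * (Jtilde n)ᵀ) i j = jtildeSign n i * jtildeSign n j * M i.rev j.rev := by
  simp only [mul_apply, Jtilde_apply, transpose_apply, ite_mul, mul_ite, zero_mul, mul_zero,
    Finset.sum_ite_eq', Finset.mem_univ, if_true]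
  ring

theorem Jtilde_mul_transpose (n : ℕ) : Jtilde n * (Jtilde n)ᵀ = 1 := by
  ext i j
  have h := Jtilde_mul_mul_transpose_apply n 1 i j
  rw [Matrix.mul_one] at h
  rw [h, one_apply, one_apply]
  by_cases hij : i = j
  · simp [hij, jtildeSign_mul_self]
  · simp [hij]

theorem Matrix.IsUpperTriangular.Jtilde_conj_transpose {n : ℕ}
    {M : Matrix (Fin (2 * n)) (Fin (2 * n)) ℝ} (hM : M.IsUpperTriangular) :
    (Jtilde n * Mᵀ * (Jtilde n)ᵀ).IsUpperTriangular := fun i j hij => by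
  have hMz : M j.rev i.rev = 0 := hM (Fin.rev_lt_rev.mpr hij)
  rw [Jtilde_mul_mul_transpose_apply, transpose_apply, hMz, mul_zero]

theorem Jtilde_conj_transpose_apply_self (n : ℕ) (M : Matrix (Fin (2 * n)) (Fin (2 * n)) ℝ)
    (i : Fin (2 * n)) : (Jtilde n * Mᵀ * (Jtilde n)ᵀ) i i = M i.rev i.rev := by
  rw [Jtilde_mul_mul_transpose_apply, jtildeSign_mul_self, one_mul, transpose_apply]

section SkewOrthogonal

variable {m K : Type*} [Fintype m] [DecidableEq m] [CommRing K] {J R : Matrix m m K}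

theorem mul_self_eq_neg_one_of_transpose_eq_neg (hJt : Jᵀ = -J) (hJJ : J * Jᵀ = 1) :
    J * J = -1 := by
  rw [← neg_neg (J * J), ← Matrix.mul_neg, ← hJt, hJJ]

theorem transpose_mul_self_conj_inv_transpose (hJt : Jᵀ = -J) (hJJ : J * Jᵀ = 1)
    (hS : Rᵀ * R * J * (Rᵀ * R) = J) :
    (J * R⁻¹ᵀ * Jᵀ)ᵀ * (J * R⁻¹ᵀ * Jᵀ) = Rᵀ * R := by
  have hSinv : (Rᵀ * R)⁻¹ = J * (Rᵀ * R) * Jᵀ := by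
    refine inv_eq_right_inv ?_
    rw [← Matrix.mul_assoc, ← Matrix.mul_assoc, hS, hJJ]
  have hJtJ : Jᵀ * J = 1 := mul_eq_one_comm.mp hJJ
  have hJJ' : J * J = -1 := mul_self_eq_neg_one_of_transpose_eq_neg hJt hJJ
  calc (J * R⁻¹ᵀ * Jᵀ)ᵀ * (J * R⁻¹ᵀ * Jᵀ) = J * (R⁻¹ * (Jᵀ * J) * R⁻¹ᵀ) * Jᵀ := by
        simp only [transpose_mul, transpose_transpose, Matrix.mul_assoc]
    _ = J * (Rᵀ * R)⁻¹ * Jᵀ := by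
        rw [hJtJ, Matrix.mul_one, Matrix.mul_inv_rev, transpose_nonsing_inv]
    _ = J * J * (Rᵀ * R) * (J * J)ᵀ := by
        rw [hSinv, transpose_mul]
        simp only [Matrix.mul_assoc]
    _ = Rᵀ * R := by
        rw [hJJ', transpose_neg, transpose_one]
        simp

theorem transpose_mul_mul_self_of_conj_inv_transpose_eq (hJt : Jᵀ = -J) (hJJ : J * Jᵀ = 1)
    (hR : IsUnit R.det) (hU : J * R⁻¹ᵀ * Jᵀ = R) : Rᵀ * J * R = J := by
  have hJJ' : J * J = -1 := mul_self_eq_neg_one_of_transpose_eq_neg hJt hJJ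
  calc Rᵀ * J * R = Rᵀ * J * (J * R⁻¹ᵀ * Jᵀ) := by rw [hU]
    _ = -((R⁻¹ * R)ᵀ * Jᵀ) := by
        rw [transpose_mul]
        simp only [← Matrix.mul_assoc]
        rw [Matrix.mul_assoc Rᵀ J J, hJJ']
        simp
    _ = J := by rw [nonsing_inv_mul R hR, transpose_one, Matrix.one_mul, hJt, neg_neg]

end SkewOrthogonal

/-- if `R` is upper triangular with strictly positive diagonal and
`(RᵀR) J̃ (RᵀR) = J̃`, then `Rᵀ J̃ R = J̃`. -/
theorem upper_triangular_almost_symplectic (n : ℕ)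
    (R : Matrix (Fin (2*n)) (Fin (2*n)) ℝ)
    (hRtri : ∀ i j : Fin (2*n), (j : ℕ) < (i : ℕ) → R i j = 0)
    (hRdiag : ∀ i : Fin (2*n), 0 < R i i)
    (hRTR : (Rᵀ * R) * Jtilde n * (Rᵀ * R) = Jtilde n) :
    Rᵀ * Jtilde n * R = Jtilde n := by
  have hR : R.IsUpperTriangular := fun i j h => hRtri i j h
  have hRd : ∀ i, R i i ≠ 0 := fun i => (hRdiag i).ne'
  have hU : (Jtilde n * R⁻¹ᵀ * (Jtilde n)ᵀ).IsUpperTriangular := hR.inv.Jtilde_conj_transpose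
  have hUd (i : Fin (2 * n)) : 0 < (Jtilde n * R⁻¹ᵀ * (Jtilde n)ᵀ) i i := by
    rw [Jtilde_conj_transpose_apply_self, hR.inv_apply_self hRd]
    exact inv_pos.mpr (hRdiag _)
  have hUR := hU.eq_of_transpose_mul_self_eq hR hUd hRdiag
    (transpose_mul_self_conj_inv_transpose (Jtilde_transpose n) (Jtilde_mul_transpose n) hRTR)
  exact transpose_mul_mul_self_of_conj_inv_transpose_eq (Jtilde_transpose n)
    (Jtilde_mul_transpose n) (hR.isUnit_det_s1 hRd) hUR
end
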